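/- arXiv:1801.03205 — 2 statements merged into one kernel-verified Lean document; each statement's English description precedes it below -/
import Mathlib

section
/- Let Σ ⊂ ℂ^{N+1} be closed, suppose each point of ℂ^N has a neighborhood U with {z ∈ ℂ : (λ,z) ∈ Σ for some λ ∈ U} bounded, and suppose that for every R > 0 the intersection of Σ with the closed ball of radius R centered at the origin of ℂ^{N+1} is polynomially convex. Then for every compact polynomially convex set K ⊂ ℂ^N, the set τ^{-1}(K) is polynomially convex, where τ is the restriction to Σ of the projection onto the first N coordinates. -/
/-!
The preimage `T = {w ∈ S | w.1 ∈ K}` is compact, because the fibres of `S` are locally bounded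
over the compact set `K`; so `T` lies in some `S ∩ closedBall 0 R`. A point of the hull of `T`
then lies in the hull of `S ∩ closedBall 0 R`, which is that set, hence in `S`; and testing against
polynomials in the first `N` variables only puts its first coordinate in the hull of `K`, which
is `K`.
-/

open Metric MvPolynomial Set MeasureTheory

noncomputable section

/-- The polynomial hull of a set `X ⊆ ℂ^N`. -/
def polyHull (N : ℕ) (X : Set (Fin N → ℂ)) : Set (Fin N → ℂ) :=
  {z | ∀ p : MvPolynomial (Fin N) ℂ,
    ‖eval z p‖ ≤ sSup ((fun x => ‖eval x p‖) '' X)}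

/-- The polynomial hull of a set `Y ⊆ ℂ^N × ℂ ≅ ℂ^{N+1}`. -/
def polyHullP (N : ℕ) (Y : Set ((Fin N → ℂ) × ℂ)) : Set ((Fin N → ℂ) × ℂ) :=
  {w | ∀ p : MvPolynomial (Fin (N + 1)) ℂ,
    ‖eval (Fin.snoc w.1 w.2) p‖ ≤ sSup ((fun x => ‖eval (Fin.snoc x.1 x.2) p‖) '' Y)}

/-- `u` is plurisubharmonic on `s`: upper semicontinuous and satisfying the
sub-mean-value inequality on every closed complex disc contained in `s`. -/
def PSHOn {E : Type*} [NormedAddCommGroup E] [NormedSpace ℂ E]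
    (u : E → ℝ) (s : Set E) : Prop :=
  UpperSemicontinuousOn u s ∧
  ∀ a b : E, ∀ c : ℂ, ∀ r : ℝ, 0 < r →
    (∀ lam : ℂ, ‖lam - c‖ ≤ r → a + lam • b ∈ s) →
    u (a + c • b) ≤ (2 * Real.pi)⁻¹ *
      ∫ θ in (0:ℝ)..(2 * Real.pi),
        u (a + (c + (r : ℂ) * Complex.exp (θ * Complex.I)) • b)

/-- An open set is pseudoconvex if it admits a continuous plurisubharmonic
exhaustion function. -/
def Pseudoconvex {E : Type*} [NormedAddCommGroup E] [NormedSpace ℂ E]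
    (Ω : Set E) : Prop :=
  ∃ φ : E → ℝ, ContinuousOn φ Ω ∧ PSHOn φ Ω ∧ ∀ c : ℝ, IsCompact {z ∈ Ω | φ z ≤ c}

/-- `S` contains no analytic discs: there is no injective holomorphic map of the
open unit disc into `E` whose image lies in `S`. -/
def ContainsNoAnalyticDiscs {E : Type*} [NormedAddCommGroup E] [NormedSpace ℂ E]
    (S : Set E) : Prop :=
  ¬ ∃ σ : ℂ → E, DifferentiableOn ℂ σ (ball (0:ℂ) 1) ∧
      InjOn σ (ball (0:ℂ) 1) ∧ σ '' ball (0:ℂ) 1 ⊆ S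

theorem isCompact_sep_fst_mem {X Y : Type*} [TopologicalSpace X] [T2Space X]
    [PseudoMetricSpace Y] [ProperSpace Y] {S : Set (X × Y)} (hS : IsClosed S)
    (hbd : ∀ x₀ : X, ∃ U ∈ nhds x₀, Bornology.IsBounded {y | ∃ x ∈ U, (x, y) ∈ S})
    {K : Set X} (hK : IsCompact K) : IsCompact {w ∈ S | w.1 ∈ K} := by
  choose U hU hUbd using hbd
  obtain ⟨t, htK⟩ := hK.elim_nhds_subcover U fun x _ => hU x
  have hZ : Bornology.IsBounded (⋃ x ∈ t, {y | ∃ x' ∈ U x, (x', y) ∈ S}) :=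
    (Bornology.isBounded_biUnion t.finite_toSet).2 fun x _ => hUbd x
  refine (hK.prod hZ.isCompact_closure).of_isClosed_subset
    (hS.inter (hK.isClosed.preimage continuous_fst)) ?_
  rintro ⟨x, y⟩ ⟨hxyS, hxK⟩
  obtain ⟨x₀, hx₀t, hxU⟩ := mem_iUnion₂.1 (htK.2 hxK)
  exact ⟨hxK, subset_closure (mem_biUnion hx₀t ⟨x, hxU, hxyS⟩)⟩

theorem eval_snoc_rename_castSucc {R : Type*} [CommSemiring R] {N : ℕ}
    (p : MvPolynomial (Fin N) R) (x : Fin N → R) (z : R) :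
    eval (Fin.snoc x z) (rename Fin.castSucc p) = eval x p := by
  rw [eval_rename, Fin.snoc_comp_castSucc]

section PolynomialHull

variable {N : ℕ}

theorem continuous_norm_eval_snoc (p : MvPolynomial (Fin (N + 1)) ℂ) :
    Continuous fun w : (Fin N → ℂ) × ℂ => ‖eval (Fin.snoc w.1 w.2) p‖ :=
  (p.continuous_eval.comp (continuous_fst.finSnoc continuous_snd)).norm

-- `sSup ∅ = 0`, so the constant polynomial `1` excludes every point.
theorem polyHullP_empty : polyHullP N ∅ = ∅ :=
  eq_empty_of_forall_notMem fun _ hw => by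
    have h := hw 1
    norm_num [Real.sSup_empty] at h

theorem subset_polyHullP {Y : Set ((Fin N → ℂ) × ℂ)} (hY : IsCompact Y) : Y ⊆ polyHullP N Y :=
  fun w hw p => le_csSup (hY.image (continuous_norm_eval_snoc p)).bddAbove ⟨w, hw, rfl⟩

theorem polyHullP_mono {Y Y' : Set ((Fin N → ℂ) × ℂ)} (h : Y ⊆ Y') (hY' : IsCompact Y') :
    polyHullP N Y ⊆ polyHullP N Y' := by
  rcases Y.eq_empty_or_nonempty with rfl | hY
  · simp [polyHullP_empty]
  intro w hw p
  exact (hw p).trans <| csSup_le_csSup (hY'.image (continuous_norm_eval_snoc p)).bddAbove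
    (hY.image _) (image_mono h)

theorem fst_mem_polyHull_of_mem_polyHullP {Y : Set ((Fin N → ℂ) × ℂ)} {X : Set (Fin N → ℂ)}
    (hX : IsCompact X) (hYX : MapsTo Prod.fst Y X) {w : (Fin N → ℂ) × ℂ}
    (hw : w ∈ polyHullP N Y) : w.1 ∈ polyHull N X := by
  rcases Y.eq_empty_or_nonempty with rfl | hY
  · simp [polyHullP_empty] at hw
  intro p
  have hwp := hw (rename Fin.castSucc p)
  simp only [eval_snoc_rename_castSucc] at hwp
  refine hwp.trans <| csSup_le_csSup (hX.image (continuous_eval p).norm).bddAbove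
    (hY.image _) ?_
  rintro _ ⟨x, hx, rfl⟩
  exact ⟨x.1, hYX hx, rfl⟩

end PolynomialHull

theorem preimage_polynomially_convex (N : ℕ)
    (S : Set ((Fin N → ℂ) × ℂ))
    (hcl : IsClosed S)
    (hbd : ∀ lam₀ : Fin N → ℂ, ∃ U ∈ nhds lam₀,
      Bornology.IsBounded {z : ℂ | ∃ lam ∈ U, (lam, z) ∈ S})
    (hpc : ∀ R : ℝ, 0 < R →
      polyHullP N (S ∩ Metric.closedBall 0 R) = S ∩ Metric.closedBall 0 R)
    (K : Set (Fin N → ℂ)) (hK : IsCompact K) (hKpc : polyHull N K = K) :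
    polyHullP N {w ∈ S | w.1 ∈ K} = {w ∈ S | w.1 ∈ K} := by
  have hT : IsCompact {w ∈ S | w.1 ∈ K} := isCompact_sep_fst_mem hcl hbd hK
  obtain ⟨R, hR, hTR⟩ := hT.isBounded.subset_closedBall_lt 0 0
  refine Subset.antisymm (fun w hw => ⟨?_, ?_⟩) (subset_polyHullP hT)
  · have hwR : w ∈ polyHullP N (S ∩ closedBall 0 R) :=
      polyHullP_mono (subset_inter (sep_subset _ _) hTR)
        ((isCompact_closedBall 0 R).inter_left hcl) hw
    exact (hpc R hR ▸ hwR).1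
  · exact hKpc ▸ fst_mem_polyHull_of_mem_polyHullP hK (fun v hv => hv.2) hw
end
end

section
/- A nonempty topological space is homeomorphic to the Cantor set if and only if it is compact, metrizable, totally disconnected, and has no isolated points. -/
open Metric MvPolynomial Set MeasureTheory

noncomputable section

/-! The Cantor set is homeomorphic to `ℕ → Bool`, which is compact, metrizable, totally
disconnected and perfect, so everything rests on Brouwer's theorem that these properties
characterize `ℕ → Bool`. Enumerate the clopen subsets of such a space `X` as `B 0, B 1, …` (there
are countably many) and refine a partition of `X` into clopen cells: at stage `n` every cell is cut
in two by a clopen set, namely by `B n` whenever `B n` cuts the cell. Since `X` is perfect and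
totally separated, every nonempty open cell can be cut. Recording on which side of the `n`-th cut a
point lies gives a continuous map `X → (ℕ → Bool)`. It is injective because the `B n` separate
points, and surjective because each cylinder of `ℕ → Bool` pulls back to a nonempty cell and `X` is
compact. -/

open Topology Filter Function TopologicalSpace

theorem Homeomorph.perfectSpace {X Y : Type*} [TopologicalSpace X] [TopologicalSpace Y]
    [PerfectSpace Y] (h : X ≃ₜ Y) : PerfectSpace X := by
  rw [perfectSpace_iff_forall_not_isolated]
  intro x
  rw [← map_neBot_iff h, h.map_punctured_nhds_eq]
  infer_instance

instance Pi.perfectSpace {ι : Type*} {Y : ι → Type*} [∀ i, TopologicalSpace (Y i)]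
    [Infinite ι] [∀ i, Nontrivial (Y i)] : PerfectSpace (∀ i, Y i) := by
  classical
  rw [perfectSpace_iff_forall_not_isolated]
  intro x
  rw [← mem_closure_iff_nhdsWithin_neBot]
  choose y hy using fun i => exists_ne (x i)
  refine mem_closure_of_tendsto (f := fun i => update x i (y i)) (b := cofinite) ?_
    (Eventually.of_forall fun i h => hy i (by simpa using congrFun h i))
  refine tendsto_pi_nhds.2 fun j => tendsto_const_nhds.congr' ?_
  filter_upwards [eventually_cofinite_ne j] with i hij
  exact (update_of_ne hij.symm _ _).symm

theorem IsClopen.isOpen_setOf_mem_iff {X : Type*} [TopologicalSpace X] {S : Set X}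
    (hS : IsClopen S) (x : X) : IsOpen {y | y ∈ S ↔ x ∈ S} := by
  by_cases hx : x ∈ S
  · simpa [hx] using hS.isOpen
  · simp only [hx, iff_false]
    exact hS.compl.isOpen

theorem exists_seq_isClopen_separating {X : Type*} [TopologicalSpace X]
    [TotallySeparatedSpace X] [Countable (Clopens X)] :
    ∃ B : ℕ → Set X, (∀ n, IsClopen (B n)) ∧ ∀ x y, x ≠ y → ∃ n, x ∈ B n ∧ y ∉ B n := by
  obtain ⟨f, hf⟩ := exists_surjective_nat (Clopens X)
  refine ⟨fun n => f n, fun n => (f n).isClopen, fun x y hxy => ?_⟩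
  obtain ⟨U, hU, hxU, hyU⟩ := exists_isClopen_of_totally_separated hxy
  obtain ⟨n, hn⟩ := hf ⟨U, hU⟩
  exact ⟨n, by simpa [hn] using hxU, by simpa [hn] using hyU⟩

namespace CantorCharacterization

section Splitting

variable {X : Type*} [TopologicalSpace X]

def SplitsBy (C Z : Set X) : Prop :=
  IsClopen Z ∧ (C ∩ Z).Nonempty ∧ (C \ Z).Nonempty

theorem exists_splitsBy [TotallySeparatedSpace X] [PerfectSpace X] {C : Set X}
    (hC : IsOpen C) (hne : C.Nonempty) : ∃ Z, SplitsBy C Z := by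
  obtain ⟨x, hx⟩ := hne
  have hC' : ∀ᶠ y in 𝓝[≠] x, y ∈ C ∧ y ≠ x :=
    Eventually.and (mem_nhdsWithin_of_mem_nhds (hC.mem_nhds hx)) self_mem_nhdsWithin
  obtain ⟨y, hyC, hyx⟩ := hC'.exists
  obtain ⟨Z, hZ, hxZ, hyZ⟩ := exists_isClopen_of_totally_separated hyx.symm
  exact ⟨Z, hZ, ⟨x, hx, hxZ⟩, ⟨y, hyC, hyZ⟩⟩

open Classical in
def splitter (C B : Set X) : Set X :=
  if SplitsBy C B then B else if h : ∃ Z, SplitsBy C Z then h.choose else ∅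

theorem isClopen_splitter (C B : Set X) : IsClopen (splitter C B) := by
  unfold splitter
  split_ifs with hB hZ
  exacts [hB.1, hZ.choose_spec.1, isClopen_empty]

theorem splitter_eq {C B : Set X} (h : SplitsBy C B) : splitter C B = B := if_pos h

theorem splitsBy_splitter {C : Set X} (B : Set X) (h : ∃ Z, SplitsBy C Z) :
    SplitsBy C (splitter C B) := by
  unfold splitter
  split_ifs with hB
  exacts [hB, h.choose_spec]

end Splitting

section Cells

variable {X : Type*} [TopologicalSpace X] (B : ℕ → Set X)

def cell : ℕ → X → Set X
  | 0, _ => univ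
  | n + 1, x => cell n x ∩ {y | y ∈ splitter (cell n x) (B n) ↔ x ∈ splitter (cell n x) (B n)}

open Classical in
def code (x : X) (n : ℕ) : Bool :=
  decide (x ∈ splitter (cell B n x) (B n))

variable {B}

theorem mem_cell_self (n : ℕ) (x : X) : x ∈ cell B n x := by
  induction n with
  | zero => trivial
  | succ n ih => exact ⟨ih, Iff.rfl⟩

theorem isOpen_cell (n : ℕ) (x : X) : IsOpen (cell B n x) := by
  induction n with
  | zero => exact isOpen_univ
  | succ n ih => exact ih.inter ((isClopen_splitter _ _).isOpen_setOf_mem_iff x)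

theorem cell_eq_of_mem {n : ℕ} {x y : X} (hy : y ∈ cell B n x) : cell B n y = cell B n x := by
  induction n with
  | zero => rfl
  | succ n ih =>
    obtain ⟨hy, hyx⟩ := hy
    rw [mem_ofPred_eq] at hyx
    simp only [cell, ih hy, hyx]

theorem mem_cell_iff {n : ℕ} {x y : X} : y ∈ cell B n x ↔ ∀ m < n, code B y m = code B x m := by
  induction n with
  | zero => simp [cell]
  | succ n ih =>
    rw [Nat.forall_lt_succ_right, ← ih]
    exact and_congr_right fun hy => by simp [code, cell_eq_of_mem hy]

theorem continuous_code : Continuous (code B) := by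
  refine continuous_pi fun n => IsLocallyConstant.continuous ?_
  rw [IsLocallyConstant.iff_eventually_eq]
  intro x
  filter_upwards [(isOpen_cell (n + 1) x).mem_nhds (mem_cell_self (n + 1) x)] with y hy
  exact mem_cell_iff.1 hy n n.lt_succ_self

theorem code_injective (hB : ∀ n, IsClopen (B n))
    (hsep : ∀ x y : X, x ≠ y → ∃ n, x ∈ B n ∧ y ∉ B n) : Injective (code B) := by
  intro x y hxy
  by_contra hne
  obtain ⟨n, hx, hy⟩ := hsep x y hne
  have hy_cell : y ∈ cell B n x := mem_cell_iff.2 fun m _ => (congrFun hxy m).symm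
  have hsplit : SplitsBy (cell B n x) (B n) :=
    ⟨hB n, ⟨x, mem_cell_self n x, hx⟩, ⟨y, hy_cell, hy⟩⟩
  have := congrFun hxy n
  simp [code, cell_eq_of_mem hy_cell, splitter_eq hsplit, hx, hy] at this

theorem code_surjective [CompactSpace X] [Nonempty X] [TotallySeparatedSpace X]
    [PerfectSpace X] : Surjective (code B) := by
  intro b
  let K (n : ℕ) : Set X := {x | ∀ m < n, code B x m = b m}
  have hK_closed (n : ℕ) : IsClosed (K n) := by
    simp only [K, ofPred_forall]
    exact isClosed_iInter fun m => isClosed_iInter fun _ =>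
      isClosed_eq ((continuous_apply m).comp continuous_code) continuous_const
  have hK_succ (n : ℕ) : K (n + 1) ⊆ K n := fun x hx m hm => hx m (hm.trans n.lt_succ_self)
  have hK_nonempty (n : ℕ) : (K n).Nonempty := by
    induction n with
    | zero => exact ⟨Classical.arbitrary X, fun m hm => absurd hm m.not_lt_zero⟩
    | succ n ih =>
      obtain ⟨x, hx⟩ := ih
      obtain ⟨-, ⟨y₁, hy₁, hy₁S⟩, ⟨y₀, hy₀, hy₀S⟩⟩ := splitsBy_splitter (B n)
        (exists_splitsBy (isOpen_cell n x) ⟨x, mem_cell_self n x⟩)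
      obtain ⟨y, hy, hyn⟩ : ∃ y ∈ cell B n x, code B y n = b n := by
        cases b n
        · exact ⟨y₀, hy₀, by simpa [code, cell_eq_of_mem hy₀] using hy₀S⟩
        · exact ⟨y₁, hy₁, by simpa [code, cell_eq_of_mem hy₁] using hy₁S⟩
      refine ⟨y, Nat.forall_lt_succ_right.2 ⟨fun m hm => ?_, hyn⟩⟩
      rw [mem_cell_iff.1 hy m hm, hx m hm]
  obtain ⟨x, hx⟩ := IsCompact.nonempty_iInter_of_sequence_nonempty_isCompact_isClosed K hK_succ
    hK_nonempty (hK_closed 0).isCompact hK_closed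
  exact ⟨x, funext fun m => mem_iInter.1 hx (m + 1) m m.lt_succ_self⟩

end Cells

end CantorCharacterization

open CantorCharacterization in
/-- **Brouwer's theorem**. -/
theorem nonempty_homeomorph_nat_bool (X : Type*) [TopologicalSpace X] [CompactSpace X]
    [T2Space X] [TotallyDisconnectedSpace X] [SecondCountableTopology X] [PerfectSpace X]
    [Nonempty X] : Nonempty (X ≃ₜ (ℕ → Bool)) := by
  have : Countable (Clopens X) := Clopens.countable_iff_secondCountable.2 ‹_›
  obtain ⟨B, hB, hsep⟩ := exists_seq_isClopen_separating (X := X)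
  let e : X ≃ (ℕ → Bool) := .ofBijective (code B) ⟨code_injective hB hsep, code_surjective⟩
  exact ⟨continuous_code.homeoOfEquivCompactToT2 (f := e)⟩

/-- `cantorSet` is Mathlib's standard middle-thirds Cantor set in `[0,1]`. -/
theorem cantor_characterization (α : Type*) [TopologicalSpace α] [Nonempty α] :
    Nonempty (α ≃ₜ cantorSet) ↔
      (CompactSpace α ∧ TopologicalSpace.MetrizableSpace α ∧
        TotallyDisconnectedSpace α ∧
        ∀ x : α, Filter.NeBot (nhdsWithin x {x}ᶜ)) := by
  constructor
  · rintro ⟨e⟩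
    let e' : α ≃ₜ (ℕ → Bool) := e.trans cantorSetHomeomorphNatToBool
    have : PerfectSpace α := e'.perfectSpace
    exact ⟨e'.symm.compactSpace, e'.isEmbedding.metrizableSpace,
      e'.symm.totallyDisconnectedSpace, PerfectSpace.not_isolated⟩
  · rintro ⟨_, _, _, hP⟩
    have : PerfectSpace α := perfectSpace_iff_forall_not_isolated.2 hP
    let := metrizableSpaceMetric α
    obtain ⟨e⟩ := nonempty_homeomorph_nat_bool α
    exact ⟨e.trans cantorSetHomeomorphNatToBool.symm⟩
end
end
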